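/- arXiv:2605.19143 — 7 statements merged into one kernel-verified Lean document; each statement's English description precedes it below -/
import Mathlib

section
/- Let r > 0 and let f : [r, ∞) → ℝ be continuously differentiable such that L := lim_{s→∞} s·f(s)² exists and ∫_r^∞ s²(f'(s))² ds < ∞. Then r·f(r)² + ∫_r^∞ f(s)² ds ≤ 2L + 8∫_r^∞ s²(f'(s))² ds. -/
open MeasureTheory Set Filter

/-- Hardy inequality near infinity:
`r f(r)² + ∫_r^∞ f² ≤ 2 lim_{s→∞} s f(s)² + 8 ∫_r^∞ s² f'(s)²`. -/
theorem stmt_1 (r L : ℝ) (hr : 0 < r) (f f' : ℝ → ℝ)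
    (hderiv : ∀ s ∈ Ici r, HasDerivWithinAt f (f' s) (Ici r) s)
    (hcont : ContinuousOn f' (Ici r))
    (hL : Tendsto (fun s => s * f s ^ 2) atTop (nhds L))
    (hint : IntegrableOn (fun s => s ^ 2 * f' s ^ 2) (Ici r)) :
    ENNReal.ofReal (r * f r ^ 2) + ∫⁻ s in Ici r, ENNReal.ofReal (f s ^ 2) ≤
      ENNReal.ofReal (2 * L + 8 * ∫ s in Ici r, s ^ 2 * f' s ^ 2) := by
  set J : ℝ := ∫ s in Ici r, s ^ 2 * f' s ^ 2 with hJdef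
  have hJ0 : 0 ≤ J := setIntegral_nonneg measurableSet_Ici (fun s _ => by positivity)
  have fc : ContinuousOn f (Ici r) := fun s hs => (hderiv s hs).continuousWithinAt
  -- continuity of the two integrands
  have hcf2 : ContinuousOn (fun s => f s ^ 2) (Ici r) := fc.pow 2
  have hcg : ContinuousOn (fun s => s ^ 2 * f' s ^ 2) (Ici r) :=
    ((continuousOn_id.pow 2).mul (hcont.pow 2))
  -- interval integrability on [r, t]
  have hIf2 : ∀ t : ℝ, r ≤ t → IntervalIntegrable (fun s => f s ^ 2) volume r t := by
    intro t ht
    apply ContinuousOn.intervalIntegrable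
    exact hcf2.mono (by rw [uIcc_of_le ht]; exact Icc_subset_Ici_self)
  have hIg : ∀ t : ℝ, r ≤ t → IntervalIntegrable (fun s => s ^ 2 * f' s ^ 2) volume r t := by
    intro t ht
    apply ContinuousOn.intervalIntegrable
    exact hcg.mono (by rw [uIcc_of_le ht]; exact Icc_subset_Ici_self)
  -- FTC: ∫_r^t (f² + 2 s f f') = t f(t)² - r f(r)²
  have hFTC : ∀ t : ℝ, r ≤ t →
      ∫ s in r..t, (f s ^ 2 + 2 * s * f s * f' s) = t * f t ^ 2 - r * f r ^ 2 := by
    intro t ht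
    have hgc : ContinuousOn (fun s => s * f s ^ 2) (Icc r t) :=
      (continuousOn_id.mul ((fc.mono Icc_subset_Ici_self).pow 2))
    refine intervalIntegral.integral_eq_sub_of_hasDeriv_right_of_le ht hgc ?_ ?_
    · intro x hx
      have hx' : x ∈ Ici r := le_of_lt hx.1
      have hfd : HasDerivAt f (f' x) x :=
        (hderiv x hx').hasDerivAt (Ici_mem_nhds hx.1)
      have : HasDerivAt (fun s => s * f s ^ 2)
          (1 * f x ^ 2 + x * (2 * f x ^ 1 * f' x)) x :=
        (hasDerivAt_id x).mul (hfd.pow 2)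
      have h2 : HasDerivAt (fun s => s * f s ^ 2) (f x ^ 2 + 2 * x * f x * f' x) x := by
        convert this using 1; ring
      exact h2.hasDerivWithinAt
    · apply ContinuousOn.intervalIntegrable
      have : ContinuousOn (fun s => f s ^ 2 + 2 * s * f s * f' s) (Ici r) :=
        hcf2.add (((continuousOn_const.mul continuousOn_id).mul fc).mul hcont)
      exact this.mono (by rw [uIcc_of_le ht]; exact Icc_subset_Ici_self)
  -- key inequality for each t ≥ r
  have key : ∀ t : ℝ, r ≤ t →
      (∫ s in r..t, f s ^ 2) ≤ 2 * (t * f t ^ 2) - 2 * (r * f r ^ 2) + 4 * J := by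
    intro t ht
    have hptwise : ∀ s : ℝ, (1 / 2 : ℝ) * f s ^ 2 - 2 * (s ^ 2 * f' s ^ 2)
        ≤ f s ^ 2 + 2 * s * f s * f' s := by
      intro s; nlinarith [sq_nonneg (f s + 2 * s * f' s)]
    have hlhs_int : IntervalIntegrable
        (fun s => (1 / 2 : ℝ) * f s ^ 2 - 2 * (s ^ 2 * f' s ^ 2)) volume r t :=
      ((hIf2 t ht).const_mul _).sub ((hIg t ht).const_mul _)
    have hrhs_int : IntervalIntegrable
        (fun s => f s ^ 2 + 2 * s * f s * f' s) volume r t := by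
      apply ContinuousOn.intervalIntegrable
      have : ContinuousOn (fun s => f s ^ 2 + 2 * s * f s * f' s) (Ici r) :=
        hcf2.add (((continuousOn_const.mul continuousOn_id).mul fc).mul hcont)
      exact this.mono (by rw [uIcc_of_le ht]; exact Icc_subset_Ici_self)
    have hmono : (∫ s in r..t, ((1 / 2 : ℝ) * f s ^ 2 - 2 * (s ^ 2 * f' s ^ 2)))
        ≤ ∫ s in r..t, (f s ^ 2 + 2 * s * f s * f' s) :=
      intervalIntegral.integral_mono_on ht hlhs_int hrhs_int (fun s _ => hptwise s)
    rw [hFTC t ht] at hmono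
    rw [intervalIntegral.integral_sub ((hIf2 t ht).const_mul _) ((hIg t ht).const_mul _),
      intervalIntegral.integral_const_mul, intervalIntegral.integral_const_mul] at hmono
    have hJt : (∫ s in r..t, s ^ 2 * f' s ^ 2) ≤ J := by
      rw [intervalIntegral.integral_of_le ht]
      apply setIntegral_mono_set hint
      · filter_upwards with s using by positivity
      · filter_upwards with s hs using le_of_lt hs.1
    nlinarith
  -- integrability of f² on Ioi r
  have hbound : ∀ᶠ t in atTop, (∫ s in r..t, f s ^ 2) ≤ 2 * L + 1 + 4 * J := by
    have h1 : ∀ᶠ t in atTop, 2 * (t * f t ^ 2) ≤ 2 * L + 1 := by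
      have := (hL.const_mul 2).eventually (eventually_le_nhds (by linarith : 2 * L < 2 * L + 1))
      exact this
    filter_upwards [h1, eventually_ge_atTop r] with t h1 ht
    have := key t ht
    nlinarith [sq_nonneg (f r), mul_nonneg hr.le (sq_nonneg (f r))]
  have hIoc : ∀ i : ℝ, IntegrableOn (fun s => f s ^ 2) (Ioc r i) := by
    intro i
    rcases le_or_gt r i with h | h
    · exact ((hIf2 i h).1)
    · simp [Ioc_eq_empty (not_lt.mpr h.le)]
  have hIf2Ioi : IntegrableOn (fun s => f s ^ 2) (Ioi r) := by
    apply integrableOn_Ioi_of_intervalIntegral_norm_bounded (2 * L + 1 + 4 * J) r hIoc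
      tendsto_id
    filter_upwards [hbound] with t hb
    have : (∫ x in r..t, ‖f x ^ 2‖) = ∫ s in r..t, f s ^ 2 := by
      simp [Real.norm_eq_abs, abs_pow, sq_abs]
    exact this.trans_le hb
  have hIf2Ici : IntegrableOn (fun s => f s ^ 2) (Ici r) :=
    hIf2Ioi.congr_set_ae Ioi_ae_eq_Ici.symm
  -- limit of interval integrals
  have htend : Tendsto (fun t => ∫ s in r..t, f s ^ 2) atTop
      (nhds (∫ s in Ici r, f s ^ 2)) := by
    have := intervalIntegral_tendsto_integral_Ioi r hIf2Ioi tendsto_id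
    rwa [← integral_Ici_eq_integral_Ioi] at this
  -- pass to the limit
  have hreal : r * f r ^ 2 + (∫ s in Ici r, f s ^ 2) ≤ 2 * L + 4 * J := by
    have hA : Tendsto (fun t => r * f r ^ 2 + ∫ s in r..t, f s ^ 2) atTop
        (nhds (r * f r ^ 2 + ∫ s in Ici r, f s ^ 2)) := tendsto_const_nhds.add htend
    have hB : Tendsto (fun t => 2 * (t * f t ^ 2) + 4 * J) atTop
        (nhds (2 * L + 4 * J)) := (hL.const_mul 2).add tendsto_const_nhds
    refine le_of_tendsto_of_tendsto hA hB ?_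
    filter_upwards [eventually_ge_atTop r] with t ht
    have := key t ht
    have h0 : 0 ≤ r * f r ^ 2 := by positivity
    nlinarith
  -- conclude
  have hlint : (∫⁻ s in Ici r, ENNReal.ofReal (f s ^ 2)) =
      ENNReal.ofReal (∫ s in Ici r, f s ^ 2) := by
    rw [← ofReal_integral_eq_lintegral_ofReal hIf2Ici]
    filter_upwards with s using sq_nonneg _
  rw [hlint, ← ENNReal.ofReal_add (by positivity) (by
    exact setIntegral_nonneg measurableSet_Ici fun s _ => sq_nonneg _)]
  apply ENNReal.ofReal_le_ofReal
  linarith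
end

section
/- Let r > 0 and let f : [r, ∞) → ℝ be continuously differentiable such that L := lim_{s→∞} s²·f(s)² exists and ∫_r^∞ s³(f'(s))² ds < ∞. Then r²·f(r)² + ∫_r^∞ s·f(s)² ds ≤ L + ∫_r^∞ s³(f'(s))² ds. -/
open MeasureTheory Set Filter

/-!
Since `(s² f²)' = 2 s f² + 2 s² f f'` and `s (f + s f')² ≥ 0`, one has
`s f² - s³ f'² ≤ (s² f²)'`. Integrating over `[r, R]` gives
`r² f(r)² + ∫_r^R s f² ≤ R² f(R)² + ∫_r^R s³ f'²`,
and monotone convergence lets `R → ∞`.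
-/

theorem weighted_hardy_Icc {f f' : ℝ → ℝ} {a b : ℝ} (ha : 0 ≤ a)
    (hab : a ≤ b) (hf : ContinuousOn f (Icc a b))
    (hderiv : ∀ x ∈ Ioo a b, HasDerivWithinAt f (f' x) (Ioi x) x)
    (hint : IntegrableOn (fun s => s ^ 3 * f' s ^ 2) (Icc a b)) :
    a ^ 2 * f a ^ 2 + ∫ s in a..b, s * f s ^ 2 ≤
      b ^ 2 * f b ^ 2 + ∫ s in a..b, s ^ 3 * f' s ^ 2 := by
  have hweight : ContinuousOn (fun s => s * f s ^ 2) (Icc a b) := continuousOn_id.mul (hf.pow 2)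
  have hftc := intervalIntegral.integral_le_sub_of_hasDeriv_right_of_le
    (g := fun s => s ^ 2 * f s ^ 2) (g' := fun s => 2 * s * f s ^ 2 + 2 * s ^ 2 * f s * f' s)
    (φ := fun s => s * f s ^ 2 - s ^ 3 * f' s ^ 2) hab ((continuousOn_pow 2).mul (hf.pow 2))
    (fun x hx => ((hasDerivWithinAt_pow 2 x).fun_mul ((hderiv x hx).fun_pow 2)).congr_deriv
      (by norm_num; ring))
    (hweight.integrableOn_Icc.sub hint)
    (fun x hx => by
      have hx : 0 ≤ x := ha.trans hx.1.le
      nlinarith [mul_nonneg hx (sq_nonneg (f x + x * f' x))])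
  rw [intervalIntegral.integral_sub (hweight.intervalIntegrable_of_Icc hab)
    ((intervalIntegrable_iff_integrableOn_Icc_of_le hab).2 hint)] at hftc
  linarith

theorem ofReal_add_setLIntegral_Ici_le_of_tendsto {h u : ℝ → ℝ} {a c B : ℝ} (hc : 0 ≤ c)
    (hh : ∀ x ∈ Ici a, 0 ≤ h x) (hcont : ContinuousOn h (Ici a))
    (hu : Tendsto u atTop (nhds B)) (hle : ∀ R, a ≤ R → c + ∫ x in a..R, h x ≤ u R) :
    ENNReal.ofReal c + ∫⁻ x in Ici a, ENNReal.ofReal (h x) ≤ ENNReal.ofReal B := by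
  have hlim : Tendsto (fun R => ENNReal.ofReal c +
      ∫⁻ x in Iic R, ENNReal.ofReal (h x) ∂volume.restrict (Ici a)) atTop
      (nhds (ENNReal.ofReal c + ∫⁻ x in Ici a, ENNReal.ofReal (h x))) :=
    ((aecover_Iic tendsto_id).lintegral_tendsto_of_countably_generated
      (hcont.aemeasurable measurableSet_Ici).ennreal_ofReal).const_add _
  refine le_of_tendsto_of_tendsto hlim (ENNReal.tendsto_ofReal hu) ?_
  filter_upwards [eventually_ge_atTop a] with R hR
  have hIcc : Icc a R ⊆ Ici a := Icc_subset_Ici_self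
  have hint : IntegrableOn h (Icc a R) := (hcont.mono hIcc).integrableOn_Icc
  have hnn : 0 ≤ᵐ[volume.restrict (Icc a R)] h :=
    (ae_restrict_mem measurableSet_Icc).mono fun x hx => hh x (hIcc hx)
  rw [Measure.restrict_restrict measurableSet_Iic, Iic_inter_Ici,
    ← ofReal_integral_eq_lintegral_ofReal hint hnn, ← ENNReal.ofReal_add hc
      (integral_nonneg_of_ae hnn), integral_Icc_eq_integral_Ioc,
    ← intervalIntegral.integral_of_le hR]
  exact ENNReal.ofReal_le_ofReal (hle R hR)

theorem stmt_2_general (r L : ℝ) (hr : 0 < r) (f f' : ℝ → ℝ)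
    (hderiv : ∀ s ∈ Ici r, HasDerivWithinAt f (f' s) (Ici r) s)
    (hL : Tendsto (fun s => s ^ 2 * f s ^ 2) atTop (nhds L))
    (hint : IntegrableOn (fun s => s ^ 3 * f' s ^ 2) (Ici r)) :
    ENNReal.ofReal (r ^ 2 * f r ^ 2) + ∫⁻ s in Ici r, ENNReal.ofReal (s * f s ^ 2) ≤
      ENNReal.ofReal (L + ∫ s in Ici r, s ^ 3 * f' s ^ 2) := by
  have hf : ContinuousOn f (Ici r) := fun s hs => (hderiv s hs).continuousWithinAt
  have hpos : ∀ s ∈ Ici r, 0 < s := fun s hs => hr.trans_le hs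
  refine ofReal_add_setLIntegral_Ici_le_of_tendsto (by positivity)
    (fun s hs => by have := hpos s hs; positivity) (continuousOn_id.mul (hf.pow 2))
    (hL.add_const _) fun R hR => ?_
  have htail : ∫ s in r..R, s ^ 3 * f' s ^ 2 ≤ ∫ s in Ici r, s ^ 3 * f' s ^ 2 := by
    rw [intervalIntegral.integral_of_le hR]
    refine setIntegral_mono_set hint ?_ (Ioc_subset_Icc_self.trans Icc_subset_Ici_self).eventuallyLE
    filter_upwards [ae_restrict_mem measurableSet_Ici] with s hs
    have := hpos s hs
    positivity
  have hstep := weighted_hardy_Icc hr.le hR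
    (hf.mono Icc_subset_Ici_self)
    (fun x hx => (hderiv x hx.1.le).mono fun y hy => hx.1.le.trans hy.le)
    (hint.mono_set Icc_subset_Ici_self)
  linarith

/-- Weighted Hardy inequality near infinity:
`r² f(r)² + ∫_r^∞ s f² ≤ lim_{s→∞} s² f(s)² + ∫_r^∞ s³ f'(s)²`. -/
theorem stmt_2 (r L : ℝ) (hr : 0 < r) (f f' : ℝ → ℝ)
    (hderiv : ∀ s ∈ Ici r, HasDerivWithinAt f (f' s) (Ici r) s)
    (hcont : ContinuousOn f' (Ici r))
    (hL : Tendsto (fun s => s ^ 2 * f s ^ 2) atTop (nhds L))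
    (hint : IntegrableOn (fun s => s ^ 3 * f' s ^ 2) (Ici r)) :
    ENNReal.ofReal (r ^ 2 * f r ^ 2) + ∫⁻ s in Ici r, ENNReal.ofReal (s * f s ^ 2) ≤
      ENNReal.ofReal (L + ∫ s in Ici r, s ^ 3 * f' s ^ 2) :=
  stmt_2_general r L hr f f' hderiv hL hint
end

section
/- Let R > 0, let w : [0, R] → ℝ be a nonnegative C¹ function with w' ≥ 0, and let ψ : [0, R] → ℝ be a C¹ function with ψ(s)/s → 0 as s → 0⁺. Then for every r ∈ (0, R]: w(r)ψ(r)²/r² + ∫_0^r w(s)ψ(s)²/s³ ds ≤ ∫_0^r w(s)(ψ'(s))²/s ds + ∫_0^r ψ(s)² w'(s)/s² ds, provided the right-hand side integrals are finite. -/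
/-!
Put `F(s) = w(s) ψ(s)² / s²`. Completing the square gives, for `s > 0`,
`F'(s) = w ψ'²/s + ψ² w'/s² - w ψ²/s³ - w (s ψ' - ψ)²/s³`,
so integrating over `[ε, r]` bounds `F(r) - F(ε) + ∫_ε^r w ψ²/s³` by the right-hand side.
As `ε → 0⁺`, `F(ε) = w(ε) (ψ(ε)/ε)² → 0`, and monotone convergence handles the left-hand side.
-/

open MeasureTheory Set Filter Topology

theorem hasDerivAt_mul_sq_div_sq {w ψ : ℝ → ℝ} {w' ψ' s : ℝ} (hw : HasDerivAt w w' s)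
    (hψ : HasDerivAt ψ ψ' s) (hs : s ≠ 0) :
    HasDerivAt (fun t => w t * ψ t ^ 2 / t ^ 2)
      (w' * ψ s ^ 2 / s ^ 2 + 2 * w s * ψ s * ψ' / s ^ 2 - 2 * w s * ψ s ^ 2 / s ^ 3) s := by
  refine ((hw.fun_mul (hψ.fun_pow 2)).fun_div (hasDerivAt_pow 2 s)
    (pow_ne_zero 2 hs)).congr_deriv ?_
  field_simp
  ring

theorem mul_sq_div_sq_deriv_le {w w' ψ ψ' s : ℝ} (hw : 0 ≤ w) (hs : 0 < s) :
    w' * ψ ^ 2 / s ^ 2 + 2 * w * ψ * ψ' / s ^ 2 - 2 * w * ψ ^ 2 / s ^ 3 ≤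
      w * ψ' ^ 2 / s + ψ ^ 2 * w' / s ^ 2 - w * ψ ^ 2 / s ^ 3 := by
  have hsq : 0 ≤ w * (s * ψ' - ψ) ^ 2 / s ^ 3 := by positivity
  have hgap : w * ψ' ^ 2 / s + ψ ^ 2 * w' / s ^ 2 - w * ψ ^ 2 / s ^ 3 -
      (w' * ψ ^ 2 / s ^ 2 + 2 * w * ψ * ψ' / s ^ 2 - 2 * w * ψ ^ 2 / s ^ 3) =
      w * (s * ψ' - ψ) ^ 2 / s ^ 3 := by
    field_simp
    ring
  linarith

theorem ContinuousOn.mul_sq_div_pow {w ψ : ℝ → ℝ} {S : Set ℝ} (hw : ContinuousOn w S)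
    (hψ : ContinuousOn ψ S) (hS : ∀ t ∈ S, t ≠ 0) (n : ℕ) :
    ContinuousOn (fun t => w t * ψ t ^ 2 / t ^ n) S :=
  (hw.mul (hψ.pow 2)).div (continuousOn_pow n) fun t ht => pow_ne_zero n (hS t ht)

theorem ENNReal.ofReal_add_setLIntegral_le {α : Type*} [MeasurableSpace α] {μ : Measure α}
    {S : Set α} {f : α → ℝ} {x y : ℝ} (hS : MeasurableSet S) (hx : 0 ≤ x)
    (hf : IntegrableOn f S μ) (hf0 : ∀ t ∈ S, 0 ≤ f t) (h : x + ∫ t in S, f t ∂μ ≤ y) :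
    ENNReal.ofReal x + ∫⁻ t in S, ENNReal.ofReal (f t) ∂μ ≤ ENNReal.ofReal y := by
  have hf0' : 0 ≤ᵐ[μ.restrict S] f := (ae_restrict_mem hS).mono hf0
  rw [← ofReal_integral_eq_lintegral_ofReal hf hf0',
    ← ENNReal.ofReal_add hx (integral_nonneg_of_ae hf0')]
  exact ENNReal.ofReal_le_ofReal h

section Hardy

variable {w w' ψ ψ' : ℝ → ℝ} {a b : ℝ}

theorem hardy_intervalIntegral_le (ha : 0 < a) (hab : a ≤ b) (hw : ∀ s ∈ Ioo a b, 0 ≤ w s)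
    (hwc : ContinuousOn w (Icc a b)) (hψc : ContinuousOn ψ (Icc a b))
    (hwd : ∀ s ∈ Ioo a b, HasDerivAt w (w' s) s) (hψd : ∀ s ∈ Ioo a b, HasDerivAt ψ (ψ' s) s)
    (h1 : IntegrableOn (fun s => w s * ψ' s ^ 2 / s) (Ioc a b))
    (h2 : IntegrableOn (fun s => ψ s ^ 2 * w' s / s ^ 2) (Ioc a b)) :
    w b * ψ b ^ 2 / b ^ 2 + ∫ s in a..b, w s * ψ s ^ 2 / s ^ 3 ≤
      w a * ψ a ^ 2 / a ^ 2 +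
        ((∫ s in a..b, w s * ψ' s ^ 2 / s) + ∫ s in a..b, ψ s ^ 2 * w' s / s ^ 2) := by
  have hne : ∀ s ∈ Icc a b, s ≠ 0 := fun s hs => (ha.trans_le hs.1).ne'
  have h1i := (intervalIntegrable_iff_integrableOn_Ioc_of_le hab).2 h1
  have h2i := (intervalIntegrable_iff_integrableOn_Ioc_of_le hab).2 h2
  have h3i := (hwc.mul_sq_div_pow hψc hne 3).intervalIntegrable_of_Icc (μ := volume) hab
  have hftc := intervalIntegral.sub_le_integral_of_hasDeriv_right_of_le hab
    (hwc.mul_sq_div_pow hψc hne 2)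
    (fun s hs =>
      (hasDerivAt_mul_sq_div_sq (hwd s hs) (hψd s hs) (ha.trans hs.1).ne').hasDerivWithinAt)
    ((intervalIntegrable_iff_integrableOn_Icc_of_le hab).1 ((h1i.add h2i).sub h3i))
    (fun s hs => mul_sq_div_sq_deriv_le (hw s hs) (ha.trans hs.1))
  rw [intervalIntegral.integral_sub (h1i.add h2i) h3i,
    intervalIntegral.integral_add h1i h2i] at hftc
  linarith

theorem hardy_setLIntegral_Ioc_le (ha : 0 < a) (hab : a ≤ b) (hw : ∀ s ∈ Icc a b, 0 ≤ w s)
    (hwc : ContinuousOn w (Icc a b)) (hψc : ContinuousOn ψ (Icc a b))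
    (hwd : ∀ s ∈ Ioo a b, HasDerivAt w (w' s) s) (hψd : ∀ s ∈ Ioo a b, HasDerivAt ψ (ψ' s) s)
    (h1 : IntegrableOn (fun s => w s * ψ' s ^ 2 / s) (Ioc a b))
    (h2 : IntegrableOn (fun s => ψ s ^ 2 * w' s / s ^ 2) (Ioc a b)) :
    ENNReal.ofReal (w b * ψ b ^ 2 / b ^ 2) +
        ∫⁻ s in Ioc a b, ENNReal.ofReal (w s * ψ s ^ 2 / s ^ 3) ≤
      ENNReal.ofReal (w a * ψ a ^ 2 / a ^ 2 +
        ((∫ s in a..b, w s * ψ' s ^ 2 / s) + ∫ s in a..b, ψ s ^ 2 * w' s / s ^ 2)) := by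
  have hne : ∀ s ∈ Icc a b, s ≠ 0 := fun s hs => (ha.trans_le hs.1).ne'
  refine ENNReal.ofReal_add_setLIntegral_le measurableSet_Ioc ?_ ?_ ?_ ?_
  · have := hw b (right_mem_Icc.2 hab)
    positivity
  · exact (hwc.mul_sq_div_pow hψc hne 3).integrableOn_Icc.mono_set Ioc_subset_Icc_self
  · intro s hs
    have := hw s (Ioc_subset_Icc_self hs)
    have := ha.trans hs.1
    positivity
  · rw [← intervalIntegral.integral_of_le hab]
    exact hardy_intervalIntegral_le ha hab (fun s hs => hw s (Ioo_subset_Icc_self hs))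
      hwc hψc hwd hψd h1 h2

end Hardy

theorem tendsto_setLIntegral_Ioc_nhdsGT (f : ℝ → ENNReal) (a b : ℝ) :
    Tendsto (fun ε => ∫⁻ s in Ioc ε b, f s) (𝓝[>] a) (𝓝 (∫⁻ s in Ioc a b, f s)) := by
  have : (atBot : Filter (Ioi a)).IsCountablyGenerated := by
    rw [← comap_coe_Ioi_nhdsGT a]
    infer_instance
  have hU : Ioc a b = ⋃ ε : Ioi a, Ioc (ε : ℝ) b := by
    ext s
    simp only [mem_Ioc, mem_iUnion, Subtype.exists, mem_Ioi, exists_prop]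
    constructor
    · rintro ⟨has, hsb⟩
      obtain ⟨ε, haε, hεs⟩ := exists_between has
      exact ⟨ε, haε, hεs, hsb⟩
    · rintro ⟨ε, haε, hεs, hsb⟩
      exact ⟨haε.trans hεs, hsb⟩
  -- continuity from below of the measure `volume.withDensity f`
  simp_rw [← withDensity_apply' f]
  rw [← map_coe_Ioi_atBot a, tendsto_map'_iff, hU]
  exact tendsto_measure_iUnion_atBot fun ε δ h => Ioc_subset_Ioc_left h

theorem tendsto_intervalIntegral_nhdsGT {f : ℝ → ℝ} {a b : ℝ} (hab : a < b)
    (hf : IntegrableOn f (Ioc a b)) :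
    Tendsto (fun ε => ∫ s in ε..b, f s) (𝓝[>] a) (𝓝 (∫ s in Ioc a b, f s)) := by
  have hcont := intervalIntegral.continuousOn_primitive_interval_left (μ := volume) (f := f)
    (a := a) (b := b) (by rwa [uIcc_of_le hab.le, integrableOn_Icc_iff_integrableOn_Ioc])
  have hlim : Tendsto (fun ε => ∫ s in ε..b, f s) (𝓝[Icc a b] a) (𝓝 (∫ s in a..b, f s)) :=
    uIcc_of_le hab.le ▸ hcont a left_mem_uIcc
  rw [intervalIntegral.integral_of_le hab.le] at hlim
  rw [← nhdsWithin_Ioc_eq_nhdsGT hab]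
  exact hlim.mono_left (nhdsWithin_mono a Ioc_subset_Icc_self)

theorem Filter.Tendsto.mul_sq_div_sq {l : Filter ℝ} {w ψ : ℝ → ℝ} {c : ℝ}
    (hw : Tendsto w l (𝓝 c)) (hψ : Tendsto (fun s => ψ s / s) l (𝓝 0)) :
    Tendsto (fun s => w s * ψ s ^ 2 / s ^ 2) l (𝓝 0) := by
  have h := hw.mul (hψ.pow 2)
  rw [zero_pow two_ne_zero, mul_zero] at h
  simpa only [div_pow, mul_div_assoc] using h

theorem stmt_3_general (R : ℝ) (w w' ψ ψ' : ℝ → ℝ)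
    (hw : ∀ s ∈ Icc 0 R, 0 ≤ w s)
    (hwd : ∀ s ∈ Icc 0 R, HasDerivWithinAt w (w' s) (Icc 0 R) s)
    (hψd : ∀ s ∈ Icc 0 R, HasDerivWithinAt ψ (ψ' s) (Icc 0 R) s)
    (h0 : Tendsto (fun s => ψ s / s) (nhdsWithin 0 (Ioi 0)) (nhds 0))
    (r : ℝ) (hr : r ∈ Ioc 0 R)
    (hint1 : IntegrableOn (fun s => w s * ψ' s ^ 2 / s) (Ioc 0 r))
    (hint2 : IntegrableOn (fun s => ψ s ^ 2 * w' s / s ^ 2) (Ioc 0 r)) :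
    ENNReal.ofReal (w r * ψ r ^ 2 / r ^ 2) +
        ∫⁻ s in Ioc 0 r, ENNReal.ofReal (w s * ψ s ^ 2 / s ^ 3) ≤
      ENNReal.ofReal ((∫ s in Ioc 0 r, w s * ψ' s ^ 2 / s) +
        ∫ s in Ioc 0 r, ψ s ^ 2 * w' s / s ^ 2) := by
  obtain ⟨hr0, hrR⟩ := hr
  have hsub : Icc 0 r ⊆ Icc 0 R := Icc_subset_Icc_right hrR
  have hwc : ContinuousOn w (Icc 0 r) := fun s hs => (hwd s (hsub hs)).continuousWithinAt.mono hsub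
  have hψc : ContinuousOn ψ (Icc 0 r) := fun s hs => (hψd s (hsub hs)).continuousWithinAt.mono hsub
  have hderiv {f f' : ℝ → ℝ} (hf : ∀ s ∈ Icc 0 R, HasDerivWithinAt f (f' s) (Icc 0 R) s) :
      ∀ s ∈ Ioo 0 r, HasDerivAt f (f' s) s := fun s hs =>
    (hf s (hsub (Ioo_subset_Icc_self hs))).hasDerivAt (Icc_mem_nhds hs.1 (hs.2.trans_le hrR))
  have hw0 : Tendsto w (𝓝[>] 0) (𝓝 (w 0)) := by
    rw [← nhdsWithin_Ioc_eq_nhdsGT hr0]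
    exact (hwc 0 (left_mem_Icc.2 hr0.le)).mono Ioc_subset_Icc_self
  have hrhs := (ENNReal.continuous_ofReal.tendsto _).comp ((hw0.mul_sq_div_sq h0).add
    ((tendsto_intervalIntegral_nhdsGT hr0 hint1).add (tendsto_intervalIntegral_nhdsGT hr0 hint2)))
  rw [zero_add] at hrhs
  refine le_of_tendsto_of_tendsto ((tendsto_setLIntegral_Ioc_nhdsGT _ 0 r).const_add _) hrhs
    (eventually_of_mem (Ioo_mem_nhdsGT hr0) fun ε hε => ?_)
  have hεr : Icc ε r ⊆ Icc 0 r := Icc_subset_Icc_left hε.1.le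
  exact hardy_setLIntegral_Ioc_le hε.1 hε.2.le (fun s hs => hw s (hsub (hεr hs))) (hwc.mono hεr)
    (hψc.mono hεr) (fun s hs => hderiv hwd s (Ioo_subset_Ioo_left hε.1.le hs))
    (fun s hs => hderiv hψd s (Ioo_subset_Ioo_left hε.1.le hs))
    (hint1.mono_set (Ioc_subset_Ioc_left hε.1.le)) (hint2.mono_set (Ioc_subset_Ioc_left hε.1.le))

/-- Hardy inequality at the center of symmetry with a monotone weight `w`. -/
theorem stmt_3 (R : ℝ) (hR : 0 < R) (w w' ψ ψ' : ℝ → ℝ)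
    (hw : ∀ s ∈ Icc 0 R, 0 ≤ w s)
    (hw' : ∀ s ∈ Icc 0 R, 0 ≤ w' s)
    (hwd : ∀ s ∈ Icc 0 R, HasDerivWithinAt w (w' s) (Icc 0 R) s)
    (hwc : ContinuousOn w' (Icc 0 R))
    (hψd : ∀ s ∈ Icc 0 R, HasDerivWithinAt ψ (ψ' s) (Icc 0 R) s)
    (hψc : ContinuousOn ψ' (Icc 0 R))
    (h0 : Tendsto (fun s => ψ s / s) (nhdsWithin 0 (Ioi 0)) (nhds 0))
    (r : ℝ) (hr : r ∈ Ioc 0 R)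
    (hint1 : IntegrableOn (fun s => w s * ψ' s ^ 2 / s) (Ioc 0 r))
    (hint2 : IntegrableOn (fun s => ψ s ^ 2 * w' s / s ^ 2) (Ioc 0 r)) :
    ENNReal.ofReal (w r * ψ r ^ 2 / r ^ 2) +
        ∫⁻ s in Ioc 0 r, ENNReal.ofReal (w s * ψ s ^ 2 / s ^ 3) ≤
      ENNReal.ofReal ((∫ s in Ioc 0 r, w s * ψ' s ^ 2 / s) +
        ∫ s in Ioc 0 r, ψ s ^ 2 * w' s / s ^ 2) :=
  stmt_3_general R w w' ψ ψ' hw hwd hψd h0 r hr hint1 hint2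
end

section
/- Let R > 0, ρ ∈ (0, 1), let w : [0, R] → ℝ be a nonnegative C¹ function with w' ≥ 0, and let ψ : [0, R] → ℝ be a C¹ function with ψ(s)/s → 0 as s → 0⁺. Then for every r ∈ (0, R]: w(r)ψ(r)²/r^{2+ρ} + (1+ρ)∫_0^r w(s)ψ(s)²/s^{3+ρ} ds ≤ ∫_0^r w(s)(ψ'(s))²/s^{1+ρ} ds + ∫_0^r ψ(s)² w'(s)/s^{2+ρ} ds, provided the right-hand side integrals are finite. -/
/-!
Write `F s = w s * ψ s ^ 2 / s ^ (2 + ρ)` and `G s = w s * ψ s ^ 2 / s ^ (3 + ρ)`. Completing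
the square, `F' + (1 + ρ) G` falls short of the right-hand integrand by
`w (ψ' - ψ / s) ^ 2 / s ^ (1 + ρ)`, so integrating over `[ε, r]` gives
`F r + (1 + ρ) H ε ≤ F ε + C` with `H ε = ∫ s in ε..r, G s`. The boundary term `F ε` need not
tend to `0`, but `F ε = -ε H' ε`, so `H` satisfies the Euler-type differential inequality
`(1 + ρ) H + ε H' ≤ C - F r`. Since `ε ^ (1 + ρ) H' ε = -w ε (ψ ε / ε) ^ 2 → 0`, this forces
`(1 + ρ) H ε ≤ C - F r` for every `ε`, and monotone convergence concludes.
-/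

open MeasureTheory Set Filter Topology

/-- `K s = s ^ a * (a * H s - c)` is antitone and bounded above by `-s * (s ^ a * H' s) → 0`. -/
lemma mul_le_of_mul_add_mul_deriv_le {a c r : ℝ} {H H' : ℝ → ℝ} (ha : 0 ≤ a)
    (hH : ∀ s ∈ Ioo 0 r, HasDerivAt H (H' s) s)
    (hle : ∀ s ∈ Ioo 0 r, a * H s + s * H' s ≤ c)
    (hlim : Tendsto (fun s => s ^ a * H' s) (𝓝[>] 0) (𝓝 0)) :
    ∀ s ∈ Ioo 0 r, a * H s ≤ c := by
  set K : ℝ → ℝ := fun s => s ^ a * (a * H s - c)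
  have hK : ∀ s ∈ Ioo 0 r,
      HasDerivAt K (a * s ^ (a - 1) * (a * H s - c) + s ^ a * (a * H' s)) s := fun s hs =>
    (Real.hasDerivAt_rpow_const (Or.inl hs.1.ne')).mul (((hH s hs).const_mul a).sub_const c)
  have hanti : AntitoneOn K (Ioo 0 r) := by
    refine antitoneOn_of_hasDerivWithinAt_nonpos (convex_Ioo 0 r)
      (f' := fun s => a * s ^ (a - 1) * (a * H s - c) + s ^ a * (a * H' s))
      (fun s hs => (hK s hs).continuousAt.continuousWithinAt) (fun s hs => ?_) (fun s hs => ?_)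
    · rw [interior_Ioo] at hs
      exact (hK s hs).hasDerivWithinAt
    · rw [interior_Ioo] at hs
      have hs0 := hs.1
      have hsplit : s ^ a = s ^ (a - 1) * s := by
        rw [← Real.rpow_add_one hs0.ne', sub_add_cancel]
      have hfactor : a * s ^ (a - 1) * (a * H s - c) + s ^ a * (a * H' s) =
          a * s ^ (a - 1) * (a * H s + s * H' s - c) := by
        rw [hsplit]; ring
      rw [hfactor]
      exact mul_nonpos_of_nonneg_of_nonpos (mul_nonneg ha (Real.rpow_nonneg hs0.le _))
        (sub_nonpos.mpr (hle s hs))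
  have hKle : ∀ s ∈ Ioo 0 r, K s ≤ -(s * (s ^ a * H' s)) := fun s hs => by
    have hpow : 0 ≤ s ^ a := Real.rpow_nonneg hs.1.le _
    have hs_le := hle s hs
    simp only [K]
    nlinarith
  intro s₀ hs₀
  have hK₀ : K s₀ ≤ 0 := by
    have hlim' : Tendsto (fun s => -(s * (s ^ a * H' s))) (𝓝[>] 0) (𝓝 0) := by
      simpa using ((tendsto_nhdsWithin_of_tendsto_nhds tendsto_id).mul hlim).neg
    refine ge_of_tendsto hlim' ?_
    filter_upwards [Ioo_mem_nhdsGT hs₀.1] with s hs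
    exact (hanti ⟨hs.1, hs.2.trans hs₀.2⟩ hs₀ hs.2.le).trans (hKle s ⟨hs.1, hs.2.trans hs₀.2⟩)
  exact sub_nonpos.mp ((mul_nonpos_iff_pos_imp_nonpos.mp hK₀).1 (Real.rpow_pos_of_pos hs₀.1 _))

lemma ofReal_add_mul_setLIntegral_Ioc_le {g : ℝ → ℝ} {a b c k B : ℝ} (hab : a < b)
    (hc : 0 ≤ c) (hk : 0 ≤ k) (hg : ∀ x ∈ Ioc a b, 0 ≤ g x)
    (hgc : ContinuousOn g (Ioc a b))
    (hB : ∀ ε ∈ Ioo a b, c + k * ∫ x in Ioc ε b, g x ≤ B) :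
    ENNReal.ofReal c + ENNReal.ofReal k * ∫⁻ x in Ioc a b, ENNReal.ofReal (g x) ≤
      ENNReal.ofReal B := by
  obtain ⟨u, hu_anti, hu_mem, hu_lim⟩ := exists_seq_strictAnti_tendsto' hab
  have hunion : Ioc a b = ⋃ n, Ioc (u n) b := by
    refine Subset.antisymm (fun x hx => ?_)
      (iUnion_subset fun n => Ioc_subset_Ioc_left (hu_mem n).1.le)
    obtain ⟨n, hn⟩ := (hu_lim.eventually (gt_mem_nhds hx.1)).exists
    exact mem_iUnion.mpr ⟨n, hn, hx.2⟩
  have hmono : Monotone fun n => Ioc (u n) b := fun m n hmn =>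
    Ioc_subset_Ioc_left (hu_anti.antitone hmn)
  rw [hunion, setLIntegral_iUnion_of_directed _ hmono.directed_le, ENNReal.mul_iSup,
    ENNReal.add_iSup]
  refine iSup_le fun n => ?_
  have hgn : 0 ≤ ∫ x in Ioc (u n) b, g x := setIntegral_nonneg measurableSet_Ioc fun x hx =>
    hg x ⟨(hu_mem n).1.trans hx.1, hx.2⟩
  have hgi : IntegrableOn g (Ioc (u n) b) :=
    ((hgc.mono fun x hx => ⟨(hu_mem n).1.trans_le hx.1, hx.2⟩).integrableOn_Icc).mono_set
      Ioc_subset_Icc_self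
  rw [← ofReal_integral_eq_lintegral_ofReal hgi, ← ENNReal.ofReal_mul hk,
    ← ENNReal.ofReal_add hc (mul_nonneg hk hgn)]
  · exact ENNReal.ofReal_le_ofReal (hB _ (hu_mem n))
  · exact (ae_restrict_iff' measurableSet_Ioc).mpr
      (Eventually.of_forall fun x hx => hg x ⟨(hu_mem n).1.trans hx.1, hx.2⟩)

lemma hardy_deriv_le {s x x' y y' ρ : ℝ} (hs : 0 < s) (hx : 0 ≤ x) :
    (x' * y ^ 2 + 2 * x * y * y') / s ^ (2 + ρ) - (2 + ρ) * (x * y ^ 2 / s ^ (3 + ρ)) ≤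
      x * y' ^ 2 / s ^ (1 + ρ) + y ^ 2 * x' / s ^ (2 + ρ)
        - (1 + ρ) * (x * y ^ 2 / s ^ (3 + ρ)) := by
  have h2 : s ^ (2 + ρ) = s ^ (1 + ρ) * s := by
    rw [← Real.rpow_add_one hs.ne']; ring_nf
  have h3 : s ^ (3 + ρ) = s ^ (1 + ρ) * s * s := by
    rw [← Real.rpow_add_one hs.ne', ← Real.rpow_add_one hs.ne']; ring_nf
  have hp : 0 < s ^ (1 + ρ) := Real.rpow_pos_of_pos hs _
  have hgap : x * y' ^ 2 / s ^ (1 + ρ) + y ^ 2 * x' / s ^ (2 + ρ)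
      - (1 + ρ) * (x * y ^ 2 / s ^ (3 + ρ))
      - ((x' * y ^ 2 + 2 * x * y * y') / s ^ (2 + ρ) - (2 + ρ) * (x * y ^ 2 / s ^ (3 + ρ)))
      = x / s ^ (1 + ρ) * (y' - y / s) ^ 2 := by
    rw [h2, h3]; field_simp; ring
  have : 0 ≤ x / s ^ (1 + ρ) * (y' - y / s) ^ 2 := by positivity
  linarith

lemma hasDerivAt_mul_sq_div_rpow {w ψ : ℝ → ℝ} {s w's ψ's ρ : ℝ} (hs : 0 < s)
    (hw : HasDerivAt w w's s) (hψ : HasDerivAt ψ ψ's s) :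
    HasDerivAt (fun t => w t * ψ t ^ 2 / t ^ (2 + ρ))
      ((w's * ψ s ^ 2 + 2 * w s * ψ s * ψ's) / s ^ (2 + ρ)
        - (2 + ρ) * (w s * ψ s ^ 2 / s ^ (3 + ρ))) s := by
  have hp : 0 < s ^ (2 + ρ) := Real.rpow_pos_of_pos hs _
  refine ((hw.mul (hψ.pow 2)).div (Real.hasDerivAt_rpow_const (p := 2 + ρ) (Or.inl hs.ne'))
    hp.ne').congr_deriv ?_
  have h1 : s ^ (2 + ρ - 1) = s ^ (2 + ρ) / s := Real.rpow_sub_one hs.ne' _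
  have h3 : s ^ (3 + ρ) = s ^ (2 + ρ) * s := by
    rw [← Real.rpow_add_one hs.ne']; ring_nf
  simp only [Pi.mul_apply, Pi.pow_apply, h1, h3]
  field_simp
  ring

lemma continuousOn_div_rpow {f : ℝ → ℝ} {S : Set ℝ} (p : ℝ) (hf : ContinuousOn f S)
    (hS : S ⊆ Ioi 0) : ContinuousOn (fun s => f s / s ^ p) S :=
  hf.div (continuousOn_id.rpow_const fun _ hs => Or.inl (hS hs).ne') fun _ hs =>
    (Real.rpow_pos_of_pos (hS hs) p).ne'

lemma hasDerivAt_integral_left_of_continuousOn_Ioc {g : ℝ → ℝ} {a b s : ℝ}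
    (hg : ContinuousOn g (Ioc a b)) (hs : s ∈ Ioo a b) :
    HasDerivAt (fun u => ∫ t in u..b, g t) (-g s) s :=
  intervalIntegral.integral_hasDerivAt_left
    ((hg.mono fun _ ht => ⟨hs.1.trans_le ht.1, ht.2⟩).intervalIntegrable_of_Icc hs.2.le)
    ((hg.mono Ioo_subset_Ioc_self).stronglyMeasurableAtFilter isOpen_Ioo s hs)
    ((hg.mono Ioo_subset_Ioc_self).continuousAt (Ioo_mem_nhds hs.1 hs.2))

section Hardy

variable {w w' ψ ψ' : ℝ → ℝ} {ρ r : ℝ}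

lemma hardy_sub_le_integral {ε : ℝ} (hε : 0 < ε) (hεr : ε ≤ r)
    (hwc : ContinuousOn w (Icc ε r)) (hw'c : ContinuousOn w' (Icc ε r))
    (hψc : ContinuousOn ψ (Icc ε r)) (hψ'c : ContinuousOn ψ' (Icc ε r))
    (hwd : ∀ s ∈ Ioo ε r, HasDerivAt w (w' s) s) (hψd : ∀ s ∈ Ioo ε r, HasDerivAt ψ (ψ' s) s)
    (hw : ∀ s ∈ Ioo ε r, 0 ≤ w s) :
    w r * ψ r ^ 2 / r ^ (2 + ρ) - w ε * ψ ε ^ 2 / ε ^ (2 + ρ)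
        + (1 + ρ) * ∫ s in ε..r, w s * ψ s ^ 2 / s ^ (3 + ρ) ≤
      ∫ s in ε..r, (w s * ψ' s ^ 2 / s ^ (1 + ρ) + ψ s ^ 2 * w' s / s ^ (2 + ρ)) := by
  have hpos : Icc ε r ⊆ Ioi 0 := fun s hs => hε.trans_le hs.1
  have hA : ContinuousOn (fun s => w s * ψ' s ^ 2 / s ^ (1 + ρ) + ψ s ^ 2 * w' s / s ^ (2 + ρ))
      (Icc ε r) :=
    (continuousOn_div_rpow _ (hwc.mul (hψ'c.pow 2)) hpos).add
      (continuousOn_div_rpow _ ((hψc.pow 2).mul hw'c) hpos)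
  have hG : ContinuousOn (fun s => (1 + ρ) * (w s * ψ s ^ 2 / s ^ (3 + ρ))) (Icc ε r) :=
    continuousOn_const.mul (continuousOn_div_rpow _ (hwc.mul (hψc.pow 2)) hpos)
  have hFTC := intervalIntegral.sub_le_integral_of_hasDeriv_right_of_le
    (g := fun s => w s * ψ s ^ 2 / s ^ (2 + ρ))
    (φ := fun s => w s * ψ' s ^ 2 / s ^ (1 + ρ) + ψ s ^ 2 * w' s / s ^ (2 + ρ)
      - (1 + ρ) * (w s * ψ s ^ 2 / s ^ (3 + ρ))) hεr
    (continuousOn_div_rpow (2 + ρ) (hwc.mul (hψc.pow 2)) hpos)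
    (fun s hs =>
      (hasDerivAt_mul_sq_div_rpow (hε.trans hs.1) (hwd s hs) (hψd s hs)).hasDerivWithinAt)
    (hA.sub hG).integrableOn_Icc (fun s hs => hardy_deriv_le (hε.trans hs.1) (hw s hs))
  rw [intervalIntegral.integral_sub (hA.intervalIntegrable_of_Icc hεr)
    (hG.intervalIntegrable_of_Icc hεr), intervalIntegral.integral_const_mul] at hFTC
  linarith

lemma hardy_truncated_le (hw : ∀ s ∈ Ioc 0 r, 0 ≤ w s) (hw' : ∀ s ∈ Ioc 0 r, 0 ≤ w' s)
    (hwc : ContinuousOn w (Ioc 0 r)) (hw'c : ContinuousOn w' (Ioc 0 r))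
    (hψc : ContinuousOn ψ (Ioc 0 r)) (hψ'c : ContinuousOn ψ' (Ioc 0 r))
    (hwd : ∀ s ∈ Ioo 0 r, HasDerivAt w (w' s) s) (hψd : ∀ s ∈ Ioo 0 r, HasDerivAt ψ (ψ' s) s)
    (hint1 : IntegrableOn (fun s => w s * ψ' s ^ 2 / s ^ (1 + ρ)) (Ioc 0 r))
    (hint2 : IntegrableOn (fun s => ψ s ^ 2 * w' s / s ^ (2 + ρ)) (Ioc 0 r))
    {ε : ℝ} (hε : ε ∈ Ioo 0 r) :
    w r * ψ r ^ 2 / r ^ (2 + ρ) + (1 + ρ) * ∫ s in ε..r, w s * ψ s ^ 2 / s ^ (3 + ρ) ≤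
      w ε * ψ ε ^ 2 / ε ^ (2 + ρ) + ((∫ s in Ioc 0 r, w s * ψ' s ^ 2 / s ^ (1 + ρ)) +
        ∫ s in Ioc 0 r, ψ s ^ 2 * w' s / s ^ (2 + ρ)) := by
  have hsub : Icc ε r ⊆ Ioc 0 r := fun s hs => ⟨hε.1.trans_le hs.1, hs.2⟩
  have hstep := hardy_sub_le_integral (ρ := ρ) hε.1 hε.2.le (hwc.mono hsub) (hw'c.mono hsub)
    (hψc.mono hsub) (hψ'c.mono hsub) (fun s hs => hwd s ⟨hε.1.trans hs.1, hs.2⟩)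
    (fun s hs => hψd s ⟨hε.1.trans hs.1, hs.2⟩) (fun s hs => hw s (hsub (Ioo_subset_Icc_self hs)))
  have htail : ∫ s in ε..r, (w s * ψ' s ^ 2 / s ^ (1 + ρ) + ψ s ^ 2 * w' s / s ^ (2 + ρ)) ≤
      (∫ s in Ioc 0 r, w s * ψ' s ^ 2 / s ^ (1 + ρ)) +
        ∫ s in Ioc 0 r, ψ s ^ 2 * w' s / s ^ (2 + ρ) := by
    rw [intervalIntegral.integral_of_le hε.2.le, ← integral_add hint1 hint2]
    refine setIntegral_mono_set (hint1.add hint2) ?_ (Ioc_subset_Ioc_left hε.1.le).eventuallyLE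
    refine (ae_restrict_iff' measurableSet_Ioc).mpr (Eventually.of_forall fun s hs => ?_)
    exact add_nonneg
      (div_nonneg (mul_nonneg (hw s hs) (sq_nonneg _)) (Real.rpow_nonneg hs.1.le _))
      (div_nonneg (mul_nonneg (sq_nonneg _) (hw' s hs)) (Real.rpow_nonneg hs.1.le _))
  linarith

lemma hardy_Ioc_le (hρ : 0 ≤ 1 + ρ)
    (hw : ∀ s ∈ Ioc 0 r, 0 ≤ w s) (hw' : ∀ s ∈ Ioc 0 r, 0 ≤ w' s)
    (hwc : ContinuousOn w (Ioc 0 r)) (hw'c : ContinuousOn w' (Ioc 0 r))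
    (hψc : ContinuousOn ψ (Ioc 0 r)) (hψ'c : ContinuousOn ψ' (Ioc 0 r))
    (hwd : ∀ s ∈ Ioo 0 r, HasDerivAt w (w' s) s) (hψd : ∀ s ∈ Ioo 0 r, HasDerivAt ψ (ψ' s) s)
    (hw0 : ContinuousWithinAt w (Ioi 0) 0) (h0 : Tendsto (fun s => ψ s / s) (𝓝[>] 0) (𝓝 0))
    (hint1 : IntegrableOn (fun s => w s * ψ' s ^ 2 / s ^ (1 + ρ)) (Ioc 0 r))
    (hint2 : IntegrableOn (fun s => ψ s ^ 2 * w' s / s ^ (2 + ρ)) (Ioc 0 r))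
    {ε : ℝ} (hε : ε ∈ Ioo 0 r) :
    w r * ψ r ^ 2 / r ^ (2 + ρ) + (1 + ρ) * ∫ s in Ioc ε r, w s * ψ s ^ 2 / s ^ (3 + ρ) ≤
      (∫ s in Ioc 0 r, w s * ψ' s ^ 2 / s ^ (1 + ρ)) +
        ∫ s in Ioc 0 r, ψ s ^ 2 * w' s / s ^ (2 + ρ) := by
  have hG : ContinuousOn (fun s => w s * ψ s ^ 2 / s ^ (3 + ρ)) (Ioc 0 r) :=
    continuousOn_div_rpow _ (hwc.mul (hψc.pow 2)) fun _ hs => hs.1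
  have h3 : ∀ s : ℝ, 0 < s → s ^ (3 + ρ) = s ^ (1 + ρ) * s * s := fun s hs => by
    rw [← Real.rpow_add_one hs.ne', ← Real.rpow_add_one hs.ne']; ring_nf
  have h2 : ∀ s : ℝ, 0 < s → s ^ (2 + ρ) = s ^ (1 + ρ) * s := fun s hs => by
    rw [← Real.rpow_add_one hs.ne']; ring_nf
  have hbound := mul_le_of_mul_add_mul_deriv_le hρ
    (c := (∫ s in Ioc 0 r, w s * ψ' s ^ 2 / s ^ (1 + ρ))
      + (∫ s in Ioc 0 r, ψ s ^ 2 * w' s / s ^ (2 + ρ)) - w r * ψ r ^ 2 / r ^ (2 + ρ))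
    (fun s hs => hasDerivAt_integral_left_of_continuousOn_Ioc hG hs) (fun s hs => ?_) ?_ ε hε
  · rw [← intervalIntegral.integral_of_le hε.2.le]
    linarith
  · have hsG : s * -(w s * ψ s ^ 2 / s ^ (3 + ρ)) = -(w s * ψ s ^ 2 / s ^ (2 + ρ)) := by
      have hp := (Real.rpow_pos_of_pos hs.1 (1 + ρ)).ne'
      rw [h3 s hs.1, h2 s hs.1]
      field_simp
    rw [hsG]
    linarith [hardy_truncated_le hw hw' hwc hw'c hψc hψ'c hwd hψd hint1 hint2 hs]
  · have heq : (fun s => -(w s * (ψ s / s) ^ 2)) =ᶠ[𝓝[>] 0]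
        fun s => s ^ (1 + ρ) * -(w s * ψ s ^ 2 / s ^ (3 + ρ)) := by
      filter_upwards [self_mem_nhdsWithin] with s hs
      have hp := (Real.rpow_pos_of_pos hs (1 + ρ)).ne'
      rw [h3 s hs]
      field_simp
    simpa using ((hw0.tendsto.mul (h0.pow 2)).neg).congr' heq

end Hardy

theorem stmt_4_general (R ρ : ℝ) (hR : 0 < R) (hρ : 0 < ρ) (w w' ψ ψ' : ℝ → ℝ)
    (hw : ∀ s ∈ Icc 0 R, 0 ≤ w s)
    (hw' : ∀ s ∈ Icc 0 R, 0 ≤ w' s)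
    (hwd : ∀ s ∈ Icc 0 R, HasDerivWithinAt w (w' s) (Icc 0 R) s)
    (hwc : ContinuousOn w' (Icc 0 R))
    (hψd : ∀ s ∈ Icc 0 R, HasDerivWithinAt ψ (ψ' s) (Icc 0 R) s)
    (hψc : ContinuousOn ψ' (Icc 0 R))
    (h0 : Tendsto (fun s => ψ s / s) (nhdsWithin 0 (Ioi 0)) (nhds 0))
    (r : ℝ) (hr : r ∈ Ioc 0 R)
    (hint1 : IntegrableOn (fun s => w s * ψ' s ^ 2 / s ^ (1 + ρ)) (Ioc 0 r))
    (hint2 : IntegrableOn (fun s => ψ s ^ 2 * w' s / s ^ (2 + ρ)) (Ioc 0 r)) :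
    ENNReal.ofReal (w r * ψ r ^ 2 / r ^ (2 + ρ)) +
        ENNReal.ofReal (1 + ρ) *
          ∫⁻ s in Ioc 0 r, ENNReal.ofReal (w s * ψ s ^ 2 / s ^ (3 + ρ)) ≤
      ENNReal.ofReal ((∫ s in Ioc 0 r, w s * ψ' s ^ 2 / s ^ (1 + ρ)) +
        ∫ s in Ioc 0 r, ψ s ^ 2 * w' s / s ^ (2 + ρ)) := by
  obtain ⟨hr0, hrR⟩ := hr
  have hsub : Ioc 0 r ⊆ Icc 0 R := fun s hs => ⟨hs.1.le, hs.2.trans hrR⟩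
  have hcont {f f' : ℝ → ℝ} (hf : ∀ s ∈ Icc 0 R, HasDerivWithinAt f (f' s) (Icc 0 R) s) :
      ContinuousOn f (Icc 0 R) := fun s hs => (hf s hs).continuousWithinAt
  have hderiv {f f' : ℝ → ℝ} (hf : ∀ s ∈ Icc 0 R, HasDerivWithinAt f (f' s) (Icc 0 R) s) :
      ∀ s ∈ Ioo 0 r, HasDerivAt f (f' s) s := fun s hs =>
    (hf s (hsub (Ioo_subset_Ioc_self hs))).hasDerivAt (Icc_mem_nhds hs.1 (hs.2.trans_le hrR))
  have hnonneg (s : ℝ) (hs : s ∈ Ioc 0 r) (q : ℝ) : 0 ≤ w s * ψ s ^ 2 / s ^ q :=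
    div_nonneg (mul_nonneg (hw s (hsub hs)) (sq_nonneg _)) (Real.rpow_nonneg hs.1.le q)
  refine ofReal_add_mul_setLIntegral_Ioc_le hr0 (hnonneg r ⟨hr0, le_rfl⟩ _) (by linarith)
    (fun s hs => hnonneg s hs _)
    (continuousOn_div_rpow _ (((hcont hwd).mono hsub).mul (((hcont hψd).mono hsub).pow 2))
      fun _ hs => hs.1)
    fun ε hε => hardy_Ioc_le (by linarith) (fun s hs => hw s (hsub hs))
      (fun s hs => hw' s (hsub hs)) ((hcont hwd).mono hsub) (hwc.mono hsub)
      ((hcont hψd).mono hsub) (hψc.mono hsub) (hderiv hwd) (hderiv hψd)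
      (((hcont hwd) 0 ⟨le_rfl, hR.le⟩).mono_of_mem_nhdsWithin (Icc_mem_nhdsGT hR)) h0
      hint1 hint2 hε

/-- Improved (ρ-weighted) Hardy inequality at the center of symmetry. -/
theorem stmt_4 (R ρ : ℝ) (hR : 0 < R) (hρ : 0 < ρ) (hρ1 : ρ < 1) (w w' ψ ψ' : ℝ → ℝ)
    (hw : ∀ s ∈ Icc 0 R, 0 ≤ w s)
    (hw' : ∀ s ∈ Icc 0 R, 0 ≤ w' s)
    (hwd : ∀ s ∈ Icc 0 R, HasDerivWithinAt w (w' s) (Icc 0 R) s)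
    (hwc : ContinuousOn w' (Icc 0 R))
    (hψd : ∀ s ∈ Icc 0 R, HasDerivWithinAt ψ (ψ' s) (Icc 0 R) s)
    (hψc : ContinuousOn ψ' (Icc 0 R))
    (h0 : Tendsto (fun s => ψ s / s) (nhdsWithin 0 (Ioi 0)) (nhds 0))
    (r : ℝ) (hr : r ∈ Ioc 0 R)
    (hint1 : IntegrableOn (fun s => w s * ψ' s ^ 2 / s ^ (1 + ρ)) (Ioc 0 r))
    (hint2 : IntegrableOn (fun s => ψ s ^ 2 * w' s / s ^ (2 + ρ)) (Ioc 0 r)) :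
    ENNReal.ofReal (w r * ψ r ^ 2 / r ^ (2 + ρ)) +
        ENNReal.ofReal (1 + ρ) *
          ∫⁻ s in Ioc 0 r, ENNReal.ofReal (w s * ψ s ^ 2 / s ^ (3 + ρ)) ≤
      ENNReal.ofReal ((∫ s in Ioc 0 r, w s * ψ' s ^ 2 / s ^ (1 + ρ)) +
        ∫ s in Ioc 0 r, ψ s ^ 2 * w' s / s ^ (2 + ρ)) :=
  stmt_4_general R ρ hR hρ w w' ψ ψ' hw hw' hwd hwc hψd hψc h0 r hr hint1 hint2
end

section
/- Let δ ∈ (0,1), Λ < 0, R > 0, and let γ̄ : [0, R] → ℝ be a positive C¹ function with γ̄(0) = 1 satisfying (log γ̄)'(r) = 2|Λ| r e^{2λ(r)}, where e^{2λ(r)} ∈ [0, 1/(δ + |Λ|r²)] for all r ∈ [0,R]. Then for all r ∈ [0,R]: 1 ≤ γ̄(r) ≤ 1 + |Λ|r²/δ. -/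
/-! Since `(log γ̄)' = 2|Λ| r e^{2λ}` lies between `0` and `2|Λ| r / (δ + |Λ| r²)`, which is the
derivative of `log (1 + |Λ| r² / δ)`, the function `log γ̄` starts at `0` and is squeezed between
`0` and `log (1 + |Λ| r² / δ)`; exponentiating gives the bounds. -/

open Set

theorem le_of_hasDerivWithinAt_le_Icc {f g f' g' : ℝ → ℝ} {a b : ℝ}
    (hf : ∀ x ∈ Icc a b, HasDerivWithinAt f (f' x) (Icc a b) x)
    (hg : ∀ x ∈ Icc a b, HasDerivWithinAt g (g' x) (Icc a b) x)
    (hle : ∀ x ∈ Ioo a b, f' x ≤ g' x) (ha : f a ≤ g a) :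
    ∀ x ∈ Icc a b, f x ≤ g x := by
  have hmono : MonotoneOn (g - f) (Icc a b) := by
    refine monotoneOn_of_hasDerivWithinAt_nonneg (f' := g' - f') (convex_Icc a b)
      (fun x hx => ((hg x hx).sub (hf x hx)).continuousWithinAt) ?_ ?_
    · rw [interior_Icc]
      exact fun x hx =>
        ((hg x (Ioo_subset_Icc_self hx)).sub (hf x (Ioo_subset_Icc_self hx))).mono
          Ioo_subset_Icc_self
    · rw [interior_Icc]
      exact fun x hx => sub_nonneg.mpr (hle x hx)
  intro x hx
  have hax : a ≤ x := hx.1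
  have := hmono ⟨le_rfl, hax.trans hx.2⟩ hx hax
  simp only [Pi.sub_apply] at this
  linarith

theorem hasDerivAt_log_one_add_mul_sq_div {c δ : ℝ} (hc : 0 ≤ c) (hδ : 0 < δ) (t : ℝ) :
    HasDerivAt (fun t => Real.log (1 + c * t ^ 2 / δ)) (2 * c * t / (δ + c * t ^ 2)) t := by
  have hpos : 0 < 1 + c * t ^ 2 / δ := by positivity
  have hquad : HasDerivAt (fun t => 1 + c * t ^ 2 / δ) (c * (2 * t) / δ) t := by
    simpa using (((hasDerivAt_pow 2 t).const_mul c).div_const δ).const_add 1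
  convert hquad.log hpos.ne' using 1
  field_simp

theorem stmt_6_general (δ Λ R : ℝ) (hδ : δ ∈ Set.Ioo 0 1)
    (γ E : ℝ → ℝ)
    (hγpos : ∀ s ∈ Set.Icc 0 R, 0 < γ s)
    (hγ0 : γ 0 = 1)
    (hE : ∀ s ∈ Set.Icc 0 R, E s ∈ Set.Icc 0 (1 / (δ + |Λ| * s ^ 2)))
    (hd : ∀ s ∈ Set.Icc 0 R,
      HasDerivWithinAt (fun t => Real.log (γ t)) (2 * |Λ| * s * E s) (Set.Icc 0 R) s) :
    ∀ s ∈ Set.Icc 0 R, 1 ≤ γ s ∧ γ s ≤ 1 + |Λ| * s ^ 2 / δ := by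
  intro s hs
  have hlog_lower : 0 ≤ Real.log (γ s) :=
    le_of_hasDerivWithinAt_le_Icc (fun _ _ => hasDerivWithinAt_const _ _ 0) hd
      (fun x hx => by
        have := (hE x (Ioo_subset_Icc_self hx)).1
        have := hx.1
        positivity)
      (by simp [hγ0]) s hs
  have hlog_upper : Real.log (γ s) ≤ Real.log (1 + |Λ| * s ^ 2 / δ) :=
    le_of_hasDerivWithinAt_le_Icc hd
      (fun x _ => (hasDerivAt_log_one_add_mul_sq_div (abs_nonneg Λ) hδ.1 x).hasDerivWithinAt)
      (fun x hx => by
        have h2x : 0 ≤ 2 * |Λ| * x := by have := hx.1; positivity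
        calc 2 * |Λ| * x * E x ≤ 2 * |Λ| * x * (1 / (δ + |Λ| * x ^ 2)) :=
              mul_le_mul_of_nonneg_left (hE x (Ioo_subset_Icc_self hx)).2 h2x
          _ = 2 * |Λ| * x / (δ + |Λ| * x ^ 2) := by ring)
      (by simp [hγ0]) s hs
  have hγs := hγpos s hs
  have hδ0 := hδ.1
  constructor
  · rwa [← Real.log_le_log_iff one_pos hγs, Real.log_one]
  · rwa [← Real.log_le_log_iff hγs (by positivity)]

/-- Bounds on `γ̄ = e^{ν−λ}` in Bondi coordinates from the constraint
`∂_r log γ̄ = 2|Λ| r e^{2λ}` with `e^{2λ} ≤ 1/(δ + |Λ|r²)` and `γ̄(0) = 1`. -/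
theorem stmt_6 (δ Λ R : ℝ) (hδ : δ ∈ Set.Ioo 0 1) (hΛ : Λ < 0) (hR : 0 < R)
    (γ E : ℝ → ℝ)
    (hγpos : ∀ s ∈ Set.Icc 0 R, 0 < γ s)
    (hγ0 : γ 0 = 1)
    (hE : ∀ s ∈ Set.Icc 0 R, E s ∈ Set.Icc 0 (1 / (δ + |Λ| * s ^ 2)))
    (hd : ∀ s ∈ Set.Icc 0 R,
      HasDerivWithinAt (fun t => Real.log (γ t)) (2 * |Λ| * s * E s) (Set.Icc 0 R) s) :
    ∀ s ∈ Set.Icc 0 R, 1 ≤ γ s ∧ γ s ≤ 1 + |Λ| * s ^ 2 / δ :=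
  stmt_6_general δ Λ R hδ γ E hγpos hγ0 hE hd
end

section
/- Let r > 0 and let ξ, g : [0, r] → ℝ be continuous with ξ C¹ on (0, r], ξ(0) = 0, ξ bounded near 0, and d/ds (s·ξ(s)) = −s·g(s) for s ∈ (0, r]. Then ∫_0^r ξ(s)²/s ds ≤ ∫_0^r s·g(s)² ds. -/
/-! With `η(s) = s ξ(s)`, the hypotheses give `η(s) = -∫₀ˢ t g(t) dt`, so Cauchy–Schwarz yields
`ξ(s)² / s ≤ s⁻² ∫₀ˢ t² g(t)² dt`. Integrating over `s ∈ (0, r]` and exchanging the order of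
integration, the weight `∫ₜʳ s⁻² ds ≤ t⁻¹` turns `t² g(t)²` into `t g(t)²`. -/

open MeasureTheory Set
open scoped ENNReal

theorem sq_integral_le_measureReal_univ_mul_integral_sq {α : Type*} [MeasurableSpace α]
    {μ : Measure α} [IsFiniteMeasure μ] {f : α → ℝ} (hf : Integrable f μ)
    (hf2 : Integrable (fun x => f x ^ 2) μ) :
    (∫ x, f x ∂μ) ^ 2 ≤ μ.real univ * ∫ x, f x ^ 2 ∂μ := by
  rcases eq_zero_or_neZero μ with rfl | _
  · simp
  have hjensen := (Even.convexOn_pow (n := 2) even_two).map_average_le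
    (continuous_pow 2).continuousOn isClosed_univ (by simp) hf hf2
  have hpos : 0 < μ.real univ := measureReal_univ_pos
  simp only [average_eq, smul_eq_mul, mul_pow] at hjensen
  rw [← mul_le_mul_iff_right₀ (inv_pos.2 hpos)]
  field_simp at hjensen ⊢
  linarith

theorem lintegral_Ioi_inv_sq {t : ℝ} (ht : 0 < t) :
    ∫⁻ s in Ioi t, ENNReal.ofReal (s ^ 2)⁻¹ = ENNReal.ofReal t⁻¹ := by
  have hrpow : EqOn (fun s : ℝ => s ^ (-2 : ℝ)) (fun s => (s ^ 2)⁻¹) (Ioi t) := fun s hs => by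
    simp [Real.rpow_neg (ht.trans hs).le]
  rw [← setLIntegral_congr_fun measurableSet_Ioi (fun s hs => congrArg ENNReal.ofReal (hrpow hs)),
    ← ofReal_integral_eq_lintegral_ofReal (integrableOn_Ioi_rpow_of_lt (by norm_num) ht)
      ((ae_restrict_mem measurableSet_Ioi).mono fun s hs => Real.rpow_nonneg (ht.trans hs).le _),
    integral_Ioi_rpow_of_lt (by norm_num) ht]
  norm_num [Real.rpow_neg_one]

theorem lintegral_inv_sq_mul_lintegral_Ioc_le {r : ℝ} {G : ℝ → ℝ≥0∞}
    (hG : AEMeasurable G (volume.restrict (Ioc 0 r))) :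
    ∫⁻ s in Ioc 0 r, ENNReal.ofReal (s ^ 2)⁻¹ * ∫⁻ t in Ioc 0 s, G t ≤
      ∫⁻ t in Ioc 0 r, ENNReal.ofReal t⁻¹ * G t := by
  have hw : Measurable fun s : ℝ => ENNReal.ofReal (s ^ 2)⁻¹ :=
    (measurable_id.pow_const 2).inv.ennreal_ofReal
  set F : ℝ × ℝ → ℝ≥0∞ := fun p => ENNReal.ofReal (p.1 ^ 2)⁻¹ * (Ioc 0 p.1).indicator G p.2
  have hF : AEMeasurable F ((volume.restrict (Ioc 0 r)).prod (volume.restrict (Ioc 0 r))) := by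
    have hset : MeasurableSet {p : ℝ × ℝ | p.2 ∈ Ioc 0 p.1} :=
      (measurableSet_lt measurable_const measurable_snd).inter
        (measurableSet_le measurable_snd measurable_fst)
    exact (hw.comp measurable_fst).aemeasurable.mul (hG.comp_snd.indicator hset)
  calc ∫⁻ s in Ioc 0 r, ENNReal.ofReal (s ^ 2)⁻¹ * ∫⁻ t in Ioc 0 s, G t
      = ∫⁻ s in Ioc 0 r, ∫⁻ t in Ioc 0 r, F (s, t) := by
        refine setLIntegral_congr_fun measurableSet_Ioc fun s hs => ?_
        have hrestrict : ∫⁻ t in Ioc 0 s, G t = ∫⁻ t in Ioc 0 r, (Ioc 0 s).indicator G t := by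
          rw [lintegral_indicator measurableSet_Ioc, Measure.restrict_restrict measurableSet_Ioc,
            inter_eq_left.2 (Ioc_subset_Ioc_right hs.2)]
        rw [hrestrict, ← lintegral_const_mul' _ _ ENNReal.ofReal_ne_top]
    _ = ∫⁻ t in Ioc 0 r, ∫⁻ s in Ioc 0 r, F (s, t) := lintegral_lintegral_swap hF
    _ ≤ ∫⁻ t in Ioc 0 r, ENNReal.ofReal t⁻¹ * G t := by
        refine setLIntegral_mono' measurableSet_Ioc fun t ht => ?_
        have hF_eq : ∀ s,
            F (s, t) = (Ici t).indicator (fun s => ENNReal.ofReal (s ^ 2)⁻¹) s * G t := by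
          intro s
          by_cases hts : t ≤ s
          · simp [F, hts, ht.1]
          · simp [F, hts]
        calc ∫⁻ s in Ioc 0 r, F (s, t)
            ≤ ∫⁻ s, (Ici t).indicator (fun s => ENNReal.ofReal (s ^ 2)⁻¹) s * G t := by
              simp only [hF_eq]; exact setLIntegral_le_lintegral _ _
          _ = (∫⁻ s in Ici t, ENNReal.ofReal (s ^ 2)⁻¹) * G t := by
              rw [lintegral_mul_const _ (hw.indicator measurableSet_Ici),
                lintegral_indicator measurableSet_Ici]
          _ = ENNReal.ofReal t⁻¹ * G t := by
              rw [← setLIntegral_congr Ioi_ae_eq_Ici, lintegral_Ioi_inv_sq ht.1]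

theorem setIntegral_Ioc_eq_sub_of_hasDerivWithinAt {f f' : ℝ → ℝ} {a b : ℝ}
    (hf : ContinuousOn f (Icc a b)) (hf' : ContinuousOn f' (Icc a b))
    (hd : ∀ x ∈ Ioo a b, HasDerivWithinAt f (f' x) (Ioc a b) x) {s : ℝ} (hs : s ∈ Icc a b) :
    ∫ t in Ioc a s, f' t = f s - f a := by
  have hsub : Icc a s ⊆ Icc a b := Icc_subset_Icc_right hs.2
  rw [← intervalIntegral.integral_of_le hs.1]
  refine intervalIntegral.integral_eq_sub_of_hasDerivAt_of_le hs.1 (hf.mono hsub)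
    (fun x hx => (hd x ⟨hx.1, hx.2.trans_le hs.2⟩).hasDerivAt ?_)
    ((hf'.mono hsub).intervalIntegrable_of_Icc hs.1)
  exact Filter.mem_of_superset (isOpen_Ioo.mem_nhds ⟨hx.1, hx.2.trans_le hs.2⟩) Ioo_subset_Ioc_self

theorem ofReal_sq_div_le_inv_sq_mul_lintegral_sq {f : ℝ → ℝ} {s x : ℝ} (hs : 0 < s)
    (hf : ContinuousOn f (Icc 0 s)) (hx : s * x = ∫ t in Ioc 0 s, f t) :
    ENNReal.ofReal (x ^ 2 / s) ≤
      ENNReal.ofReal (s ^ 2)⁻¹ * ∫⁻ t in Ioc 0 s, ENNReal.ofReal (f t ^ 2) := by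
  have hf2 : IntegrableOn (fun t => f t ^ 2) (Ioc 0 s) :=
    (hf.pow 2).integrableOn_Icc.mono_set Ioc_subset_Icc_self
  have hcs := sq_integral_le_measureReal_univ_mul_integral_sq
    (hf.integrableOn_Icc.mono_set Ioc_subset_Icc_self) hf2
  rw [Measure.real_def, Measure.restrict_apply_univ, ← Measure.real_def,
    Real.volume_real_Ioc_of_le hs.le, sub_zero, ← hx] at hcs
  rw [← ofReal_integral_eq_lintegral_ofReal hf2 (Filter.Eventually.of_forall fun t => sq_nonneg _),
    ← ENNReal.ofReal_mul (by positivity)]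
  refine ENNReal.ofReal_le_ofReal ?_
  rw [div_le_iff₀ hs]
  field_simp
  nlinarith

theorem stmt_12_general (r : ℝ) (ξ g : ℝ → ℝ)
    (hξ : ContinuousOn ξ (Icc 0 r)) (hg : ContinuousOn g (Icc 0 r))
    (hd : ∀ s ∈ Ioc 0 r,
      HasDerivWithinAt (fun t => t * ξ t) (-(s * g s)) (Ioc 0 r) s) :
    (∫⁻ s in Ioc 0 r, ENNReal.ofReal (ξ s ^ 2 / s)) ≤
      ENNReal.ofReal (∫ s in Ioc 0 r, s * g s ^ 2) := by
  set f : ℝ → ℝ := fun t => -(t * g t)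
  have hf : ContinuousOn f (Icc 0 r) := (continuousOn_id.mul hg).neg
  have hpointwise : ∀ s ∈ Ioc 0 r, ENNReal.ofReal (ξ s ^ 2 / s) ≤
      ENNReal.ofReal (s ^ 2)⁻¹ * ∫⁻ t in Ioc 0 s, ENNReal.ofReal (f t ^ 2) := fun s hs =>
    ofReal_sq_div_le_inv_sq_mul_lintegral_sq hs.1 (hf.mono (Icc_subset_Icc_right hs.2)) <| by
      simpa using (setIntegral_Ioc_eq_sub_of_hasDerivWithinAt (continuousOn_id.mul hξ) hf
        (fun x hx => hd x (Ioo_subset_Ioc_self hx)) (Ioc_subset_Icc_self hs)).symm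
  calc ∫⁻ s in Ioc 0 r, ENNReal.ofReal (ξ s ^ 2 / s)
      ≤ ∫⁻ s in Ioc 0 r, ENNReal.ofReal (s ^ 2)⁻¹ * ∫⁻ t in Ioc 0 s, ENNReal.ofReal (f t ^ 2) :=
        setLIntegral_mono' measurableSet_Ioc hpointwise
    _ ≤ ∫⁻ t in Ioc 0 r, ENNReal.ofReal t⁻¹ * ENNReal.ofReal (f t ^ 2) :=
        lintegral_inv_sq_mul_lintegral_Ioc_le
          (((hf.pow 2).mono Ioc_subset_Icc_self).aemeasurable measurableSet_Ioc).ennreal_ofReal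
    _ = ∫⁻ t in Ioc 0 r, ENNReal.ofReal (t * g t ^ 2) :=
        setLIntegral_congr_fun measurableSet_Ioc fun t ht => by
          rw [← ENNReal.ofReal_mul (inv_nonneg.2 ht.1.le)]
          congr 1
          simp only [f, neg_sq]
          field_simp
    _ = ENNReal.ofReal (∫ s in Ioc 0 r, s * g s ^ 2) :=
        (ofReal_integral_eq_lintegral_ofReal
          ((continuousOn_id.mul (hg.pow 2)).integrableOn_Icc.mono_set Ioc_subset_Icc_self)
          ((ae_restrict_mem measurableSet_Ioc).mono
            fun t ht => mul_nonneg ht.1.le (sq_nonneg _))).symm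

/-- Center Hardy inequality applied to `η(s) = s ξ(s)` with `η' = −s g`. -/
theorem stmt_12 (r : ℝ) (hr : 0 < r) (ξ g : ℝ → ℝ)
    (hξ : ContinuousOn ξ (Icc 0 r)) (hg : ContinuousOn g (Icc 0 r))
    (hξ0 : ξ 0 = 0)
    (hd : ∀ s ∈ Ioc 0 r,
      HasDerivWithinAt (fun t => t * ξ t) (-(s * g s)) (Ioc 0 r) s) :
    (∫⁻ s in Ioc 0 r, ENNReal.ofReal (ξ s ^ 2 / s)) ≤
      ENNReal.ofReal (∫ s in Ioc 0 r, s * g s ^ 2) :=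
  stmt_12_general r ξ g hξ hg hd
end

section
/- For δ₀ > 0 define x₁ = (5δ₀/4)/(1+δ₀) and F(x) = (δ₀/4)∫_x^1 (x'/(x'(1+δ₀)−δ₀))^{5/4} dx' for x ∈ [x₁, 1]. Then there exists δ* > 0 such that for all δ₀ ∈ (0, δ*) and all x ∈ [x₁, 1]: F(x) < δ₀/2. -/
/-- helper: if `1 ≤ r ≤ B` then `r^(5/4) ≤ B^2`. -/
lemma aux_rpow_le {r B : ℝ} (h1 : 1 ≤ r) (hB : r ≤ B) : r ^ ((5:ℝ)/4) ≤ B ^ 2 := by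
  have h0 : 0 ≤ r := le_trans zero_le_one h1
  calc r ^ ((5:ℝ)/4) ≤ r ^ (2:ℝ) :=
        Real.rpow_le_rpow_of_exponent_le h1 (by norm_num)
    _ = r ^ 2 := Real.rpow_two r
    _ ≤ B ^ 2 := by nlinarith

/-- Auxiliary estimate: `F(x) < δ₀/2` for all `x ∈ [x₁, 1]` and all
sufficiently small `δ₀`. -/
theorem stmt_16 :
    ∃ δstar > (0:ℝ), ∀ δ₀ : ℝ, 0 < δ₀ → δ₀ < δstar →
      ∀ x ∈ Set.Icc ((5 * δ₀ / 4) / (1 + δ₀)) (1:ℝ),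
        δ₀ / 4 * (∫ x' in x..(1:ℝ),
          (x' / (x' * (1 + δ₀) - δ₀)) ^ ((5:ℝ)/4)) < δ₀ / 2 := by
  refine ⟨1/1000, by norm_num, ?_⟩
  intro δ₀ hδ hδs x hx
  obtain ⟨hx1, hx2⟩ := hx
  have hδ1 : (0:ℝ) < 1 + δ₀ := by linarith
  set x₁ : ℝ := 5 * δ₀ / 4 / (1 + δ₀) with hx₁def
  set f : ℝ → ℝ := fun t => (t / (t * (1 + δ₀) - δ₀)) ^ ((5:ℝ)/4) with hfdef
  have hx₁pos : 0 < x₁ := by positivity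
  -- denominator lower bound on [x₁, ∞)
  have hden : ∀ t, x₁ ≤ t → δ₀ / 4 ≤ t * (1 + δ₀) - δ₀ := by
    intro t ht
    have h5 : 5 * δ₀ / 4 ≤ t * (1 + δ₀) := by
      rw [hx₁def, div_le_iff₀ hδ1] at ht; linarith
    linarith
  have hdenpos : ∀ t, x₁ ≤ t → 0 < t * (1 + δ₀) - δ₀ := fun t ht =>
    lt_of_lt_of_le (by positivity) (hden t ht)
  -- ratio lower bound for t ≤ 1
  have hrlo : ∀ t, x₁ ≤ t → t ≤ 1 → 1 ≤ t / (t * (1 + δ₀) - δ₀) := by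
    intro t ht ht1
    rw [le_div_iff₀ (hdenpos t ht)]
    nlinarith
  -- ratio ≤ 5 on [x₁, ∞)
  have hrhi5 : ∀ t, x₁ ≤ t → t / (t * (1 + δ₀) - δ₀) ≤ 5 := by
    intro t ht
    rw [div_le_iff₀ (hdenpos t ht)]
    have h5 : 5 * δ₀ / 4 ≤ t * (1 + δ₀) := by
      rw [hx₁def, div_le_iff₀ hδ1] at ht; linarith
    have ht0 : 0 ≤ t := le_of_lt (lt_of_lt_of_le hx₁pos ht)
    nlinarith
  -- ratio ≤ 5/4 for t ≥ 5δ₀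
  have hrhi54 : ∀ t, x₁ ≤ t → 5 * δ₀ ≤ t → t / (t * (1 + δ₀) - δ₀) ≤ 5/4 := by
    intro t ht ht5
    rw [div_le_iff₀ (hdenpos t ht)]
    have ht0 : 0 ≤ t := le_of_lt (lt_of_lt_of_le hx₁pos ht)
    nlinarith
  -- f bounds
  have hf25 : ∀ t ∈ Set.Icc x₁ 1, f t ≤ 25 := by
    intro t ⟨ht, ht1⟩
    have := aux_rpow_le (hrlo t ht ht1) (hrhi5 t ht)
    simpa [hfdef] using this.trans (by norm_num)
  have hf2 : ∀ t ∈ Set.Icc x₁ 1, 5 * δ₀ ≤ t → f t ≤ 25/16 := by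
    intro t ⟨ht, ht1⟩ ht5
    have := aux_rpow_le (hrlo t ht ht1) (hrhi54 t ht ht5)
    simpa [hfdef] using this.trans (by norm_num)
  -- continuity of f on Ici x₁
  have hcont : ContinuousOn f (Set.Ici x₁) := by
    apply ContinuousOn.rpow_const
    · exact ContinuousOn.div continuousOn_id
        (((continuous_id.mul continuous_const).sub continuous_const).continuousOn)
        (fun t ht => ne_of_gt (hdenpos t ht))
    · intro t ht; right; norm_num
  have hint : ∀ a b : ℝ, x₁ ≤ a → x₁ ≤ b → IntervalIntegrable f MeasureTheory.volume a b := by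
    intro a b ha hb
    apply (hcont.mono ?_).intervalIntegrable
    intro t ht
    rcases Set.mem_uIcc.mp ht with ⟨h, _⟩ | ⟨h, _⟩
    · exact le_trans ha h
    · exact le_trans hb h
  -- reduce to integral < 2
  have key : (∫ x' in x..(1:ℝ), f x') < 2 := by
    by_cases hcase : 5 * δ₀ ≤ x
    · -- whole interval has f ≤ 25/16
      calc (∫ x' in x..(1:ℝ), f x') ≤ ∫ _ in x..(1:ℝ), (25/16 : ℝ) := by
            apply intervalIntegral.integral_mono_on hx2 (hint x 1 hx1 (le_trans hx1 hx2)) intervalIntegrable_const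
            intro t ⟨ht, ht1⟩
            exact hf2 t ⟨le_trans hx1 ht, ht1⟩ (le_trans hcase ht)
        _ = (1 - x) * (25/16) := by simp; ring
        _ < 2 := by nlinarith [lt_of_lt_of_le hx₁pos hx1]
    · push_neg at hcase
      have h5δ1 : 5 * δ₀ ≤ 1 := by linarith
      have hx₁5 : x₁ ≤ 5 * δ₀ := le_of_lt (lt_of_le_of_lt hx1 hcase)
      have hsplit : (∫ x' in x..(1:ℝ), f x')
          = (∫ x' in x..(5*δ₀), f x') + (∫ x' in (5*δ₀)..(1:ℝ), f x') :=
        (intervalIntegral.integral_add_adjacent_intervals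
          (hint x (5*δ₀) hx1 hx₁5) (hint (5*δ₀) 1 hx₁5 (le_trans hx₁5 h5δ1))).symm
      have h1 : (∫ x' in x..(5*δ₀), f x') ≤ (5*δ₀ - x) * 25 := by
        calc (∫ x' in x..(5*δ₀), f x') ≤ ∫ _ in x..(5*δ₀), (25:ℝ) := by
              apply intervalIntegral.integral_mono_on (le_of_lt hcase)
                (hint x (5*δ₀) hx1 hx₁5) intervalIntegrable_const
              intro t ⟨ht, ht5⟩
              exact hf25 t ⟨le_trans hx1 ht, le_trans ht5 h5δ1⟩
          _ = (5*δ₀ - x) * 25 := by simp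
      have h2 : (∫ x' in (5*δ₀)..(1:ℝ), f x') ≤ (1 - 5*δ₀) * (25/16) := by
        calc (∫ x' in (5*δ₀)..(1:ℝ), f x') ≤ ∫ _ in (5*δ₀)..(1:ℝ), (25/16:ℝ) := by
              apply intervalIntegral.integral_mono_on h5δ1
                (hint (5*δ₀) 1 hx₁5 (le_trans hx₁5 h5δ1)) intervalIntegrable_const
              intro t ⟨ht, ht1⟩
              exact hf2 t ⟨le_trans hx₁5 ht, ht1⟩ ht
          _ = (1 - 5*δ₀) * (25/16) := by simp; ring
      have hxpos : 0 < x := lt_of_lt_of_le hx₁pos hx1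
      rw [hsplit]
      nlinarith
  calc δ₀ / 4 * (∫ x' in x..(1:ℝ), f x') < δ₀ / 4 * 2 :=
        mul_lt_mul_of_pos_left key (by linarith)
    _ = δ₀ / 2 := by ring
end
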